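/- arXiv:2303.06921 — 2 statements merged into one kernel-verified Lean document; each statement's English description precedes it below -/
import Mathlib

section
/- Let S be a semiring having a multiplicatively absorbing element (or more generally such that M_k(S) has one for some k ≥ 1). Then the following are equivalent: (i) M_n(S) is congruence-simple for every n ≥ 1; (ii) M_n(S) is congruence-simple for at least one n ≥ 2; (iii) S is congruence-simple, S contains no bi-absorbing element, and |S·S| ≥ 2. -/
/-- A semiring in the sense of the paper: associative `+` and `*`, `+` commutative,
`*` distributing over `+` from both sides; no zero or unity assumed. -/
class PSemiring (S : Type) extends AddCommSemigroup S, Semigroup S where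
  left_distrib : ∀ a b c : S, a * (b + c) = a * b + a * c
  right_distrib : ∀ a b c : S, (a + b) * c = a * c + b * c

section Defs
variable {T : Type} [Add T] [Mul T]

def MulAbsorbing (w : T) : Prop := ∀ a : T, a * w = w ∧ w * a = w
def AddAbsorbing (w : T) : Prop := ∀ a : T, a + w = w
def AddNeutral (w : T) : Prop := ∀ a : T, a + w = a
def BiAbsorbing (w : T) : Prop := MulAbsorbing w ∧ AddAbsorbing w
def IsZero (w : T) : Prop := MulAbsorbing w ∧ AddNeutral w
def IsUnity (w : T) : Prop := ∀ a : T, w * a = a ∧ a * w = a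

def IsBiIdeal (I : Set T) : Prop :=
  I.Nonempty ∧ ∀ a ∈ I, ∀ s : T, a + s ∈ I ∧ a * s ∈ I ∧ s * a ∈ I

def IsCongruence (r : T → T → Prop) : Prop :=
  Equivalence r ∧ (∀ a b c d : T, r a b → r c d → r (a + c) (b + d)) ∧
    (∀ a b c d : T, r a b → r c d → r (a * c) (b * d))

/-- The standard quasiordering on a semiring. -/
def leS (a b : T) : Prop := a = b ∨ ∃ c : T, a + c = b

/-- `addPow m b` is the `(m+1)`-fold sum `b + ⋯ + b`. -/
def addPow : ℕ → T → T
  | 0, b => b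
  | m + 1, b => addPow m b + b

end Defs

def CongSimple (T : Type) [Add T] [Mul T] : Prop :=
  (∃ a b : T, a ≠ b) ∧
    ∀ r : T → T → Prop, IsCongruence r →
      (∀ a b : T, r a b ↔ a = b) ∨ (∀ a b : T, r a b)

def BiIdealSimple (T : Type) [Add T] [Mul T] : Prop :=
  (∃ a b : T, a ≠ b) ∧
    ∀ I : Set T, IsBiIdeal I → (∃ w : T, I = {w}) ∨ I = Set.univ

def BiIdealFree (T : Type) [Add T] [Mul T] : Prop :=
  (∃ a b : T, a ≠ b) ∧ ∀ I : Set T, IsBiIdeal I → I = Set.univ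

/-- Sum of a nonempty family indexed by `Fin (n+1)`. -/
def finSum {S : Type} [Add S] : ∀ {n : ℕ}, (Fin (n + 1) → S) → S
  | 0, f => f 0
  | n + 1, f => finSum (fun i : Fin (n + 1) => f i.castSucc) + f (Fin.last (n + 1))

/-- `Mat n S` is the semiring of `(n+1) × (n+1)` matrices over `S`. -/
structure Mat (n : ℕ) (S : Type) where
  entry : Fin (n + 1) → Fin (n + 1) → S

instance {n : ℕ} {S : Type} [Add S] : Add (Mat n S) :=
  ⟨fun A B => ⟨fun i j => A.entry i j + B.entry i j⟩⟩

instance {n : ℕ} {S : Type} [Add S] [Mul S] : Mul (Mat n S) :=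
  ⟨fun A B => ⟨fun i j => finSum (fun k => A.entry i k * B.entry k j)⟩⟩

/-- The constant matrix `ā`. -/
def Mat.const (n : ℕ) {S : Type} (a : S) : Mat n S := ⟨fun _ _ => a⟩


/-!
An absorbing matrix yields an absorbing element `w` of `S`.

Necessity, for `n ≥ 2`: a congruence on `S` lifts entrywise to `M_n(S)`; a bi-absorbing `o`
gives the Rees congruence of the bi-ideal of matrices having an entry `o`; and if all products
in `S` coincide, agreeing in the `(0,0)` entry is a congruence. None of these is the identity
or full on `M_n(S)`.

Sufficiency: without bi-absorbing elements `w` is a zero, so `M_n(S)` has matrix units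
`E_ij(x)`, and a congruence `R` on `M_n(S)` restricts to the congruence
`u ~ v ↔ ∀ i j, E_ij(u) R E_ij(v)` on `S`. If that one is full, so is `R`, as every matrix is a
sum of matrix units. If it is the identity, `E_ip(x) A E_qj(y) = E_ij(x A_pq y)` shows that
entries of `R`-related matrices are not separated by two-sided multiplication, which in a
congruence-simple semiring with `|S·S| ≥ 2` forces them to be equal.
-/

section FinSum

theorem finSum_rel {T : Type} [Add T] {r : T → T → Prop}
    (hadd : ∀ a b c d : T, r a b → r c d → r (a + c) (b + d)) :
    ∀ {n : ℕ} {f g : Fin (n + 1) → T}, (∀ i, r (f i) (g i)) → r (finSum f) (finSum g)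
  | 0, _, _, h => h 0
  | _ + 1, _, _, h => hadd _ _ _ _ (finSum_rel hadd fun i => h i.castSucc) (h _)

variable {T : Type} [AddCommSemigroup T]

theorem finSum_eq_of_forall {w : T} (hw : AddNeutral w) :
    ∀ {n : ℕ} {f : Fin (n + 1) → T}, (∀ c, f c = w) → finSum f = w
  | 0, _, h => h 0
  | _ + 1, _, h => by
    rw [finSum, finSum_eq_of_forall hw fun c => h c.castSucc, h]
    exact hw w

theorem finSum_eq_of_forall_ne {w : T} (hw : AddNeutral w) :
    ∀ {n : ℕ} {f : Fin (n + 1) → T} (k : Fin (n + 1)), (∀ c, c ≠ k → f c = w) →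
      finSum f = f k
  | 0, f, k, _ => by rw [Fin.eq_zero k]; rfl
  | n + 1, f, k, h => by
    rw [finSum]
    induction k using Fin.lastCases with
    | last =>
      rw [finSum_eq_of_forall hw fun c => h _ (Fin.castSucc_lt_last c).ne, add_comm]
      exact hw _
    | cast k =>
      rw [finSum_eq_of_forall_ne hw k fun c hc => h _ (Fin.castSucc_injective _ |>.ne hc),
        h _ (Fin.castSucc_lt_last k).ne']
      exact hw _

theorem finSum_eq_of_addAbsorbing {o : T} (ho : AddAbsorbing o) :
    ∀ {n : ℕ} {f : Fin (n + 1) → T} (k : Fin (n + 1)), f k = o → finSum f = o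
  | 0, f, k, h => by rw [Fin.eq_zero k] at h; exact h
  | n + 1, f, k, h => by
    rw [finSum]
    induction k using Fin.lastCases with
    | last => rw [h]; exact ho _
    | cast k => rw [finSum_eq_of_addAbsorbing ho k h, add_comm]; exact ho _

end FinSum

theorem mul_finSum {S : Type} [PSemiring S] (a : S) :
    ∀ {n : ℕ} (f : Fin (n + 1) → S), a * finSum f = finSum fun i => a * f i
  | 0, _ => rfl
  | _ + 1, f => by rw [finSum, PSemiring.left_distrib, mul_finSum a]; rfl

theorem finSum_mul {S : Type} [PSemiring S] (a : S) :
    ∀ {n : ℕ} (f : Fin (n + 1) → S), finSum f * a = finSum fun i => f i * a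
  | 0, _ => rfl
  | _ + 1, f => by rw [finSum, PSemiring.right_distrib, finSum_mul a]; rfl

namespace Mat

variable {n : ℕ} {S : Type}

@[ext]
theorem ext {A B : Mat n S} (h : ∀ i j, A.entry i j = B.entry i j) : A = B := by
  cases A; cases B
  congr
  funext i j
  exact h i j

theorem add_entry [Add S] (A B : Mat n S) (i j : Fin (n + 1)) :
    (A + B).entry i j = A.entry i j + B.entry i j := rfl

theorem mul_entry [Add S] [Mul S] (A B : Mat n S) (i j : Fin (n + 1)) :
    (A * B).entry i j = finSum fun k => A.entry i k * B.entry k j := rfl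

instance [AddCommSemigroup S] : AddCommSemigroup (Mat n S) where
  add := (· + ·)
  add_assoc _ _ _ := Mat.ext fun _ _ => add_assoc _ _ _
  add_comm _ _ := Mat.ext fun _ _ => add_comm _ _

theorem finSum_entry [Add S] {m : ℕ} (F : Fin (m + 1) → Mat n S) (i j : Fin (n + 1)) :
    (finSum F).entry i j = finSum fun t => (F t).entry i j := by
  induction m with
  | zero => rfl
  | succ m ih => rw [finSum, add_entry, ih]; rfl

theorem const_injective : Function.Injective (Mat.const n : S → Mat n S) :=
  fun _ _ h => congrArg (fun A => Mat.entry A 0 0) h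

theorem exists_ne_of_exists_ne (h : ∃ A B : Mat n S, A ≠ B) : ∃ a b : S, a ≠ b := by
  obtain ⟨A, B, hAB⟩ := h
  by_contra! h'
  exact hAB (Mat.ext fun i j => h' _ _)

/-- The matrix unit `E_ij(x)` when `w` is a zero of `S`. -/
def single (w : S) (i j : Fin (n + 1)) (x : S) : Mat n S :=
  ⟨fun a b => if a = i ∧ b = j then x else w⟩

theorem single_entry (w : S) (i j a b : Fin (n + 1)) (x : S) :
    (single w i j x).entry a b = if a = i ∧ b = j then x else w := rfl

theorem single_entry_self (w : S) (i j : Fin (n + 1)) (x : S) :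
    (single w i j x).entry i j = x := if_pos ⟨rfl, rfl⟩

theorem single_zero_zero_ne_const {m : ℕ} {x y : S} (hxy : x ≠ y) :
    single y 0 0 x ≠ Mat.const (m + 1) x := fun h => by
  have h01 := congrArg (fun A => Mat.entry A 0 1) h
  simp [single_entry, Mat.const] at h01
  exact hxy h01.symm

variable [PSemiring S] {w : S}

theorem single_add_single (hw : AddNeutral w) (i j : Fin (n + 1)) (x y : S) :
    single w i j x + single w i j y = single w i j (x + y) := by
  ext a b
  rw [add_entry]
  simp only [single_entry]
  split_ifs
  · rfl
  · exact hw w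

theorem single_mul_entry (hw : IsZero w) (i p : Fin (n + 1)) (x : S) (A : Mat n S)
    (a b : Fin (n + 1)) :
    (single w i p x * A).entry a b = if a = i then x * A.entry p b else w := by
  rw [mul_entry]
  split_ifs with ha
  · refine (finSum_eq_of_forall_ne hw.2 p fun c hc => ?_).trans ?_
    · simp only [single_entry, hc, and_false, if_false, (hw.1 _).2]
    · simp only [single_entry, ha, and_self, if_true]
  · exact finSum_eq_of_forall hw.2 fun c => by
      simp only [single_entry, ha, false_and, if_false, (hw.1 _).2]

theorem mul_single_entry (hw : IsZero w) (q j : Fin (n + 1)) (y : S) (A : Mat n S)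
    (a b : Fin (n + 1)) :
    (A * single w q j y).entry a b = if b = j then A.entry a q * y else w := by
  rw [mul_entry]
  split_ifs with hb
  · refine (finSum_eq_of_forall_ne hw.2 q fun c hc => ?_).trans ?_
    · simp only [single_entry, hc, false_and, if_false, (hw.1 _).1]
    · simp only [single_entry, hb, and_self, if_true]
  · exact finSum_eq_of_forall hw.2 fun c => by
      simp only [single_entry, hb, and_false, if_false, (hw.1 _).1]

theorem single_mul_single (hw : IsZero w) (i k j : Fin (n + 1)) (x y : S) :
    single w i k x * single w k j y = single w i j (x * y) := by
  ext a b
  rw [single_mul_entry hw, single_entry, single_entry]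
  by_cases ha : a = i <;> by_cases hb : b = j <;> simp [ha, hb, (hw.1 _).1]

theorem single_mul_mul_single (hw : IsZero w) (i p q j : Fin (n + 1)) (x y : S)
    (A : Mat n S) :
    single w i p x * A * single w q j y = single w i j (x * A.entry p q * y) := by
  ext a b
  rw [mul_single_entry hw, single_mul_entry hw, single_entry]
  by_cases ha : a = i <;> by_cases hb : b = j <;> simp [ha, hb, (hw.1 _).2]

theorem finSum_single_entry (hw : AddNeutral w) (i : Fin (n + 1)) (f : Fin (n + 1) → S)
    (a b : Fin (n + 1)) :
    (finSum fun j => single w i j (f j)).entry a b = if a = i then f b else w := by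
  rw [finSum_entry]
  split_ifs with ha
  · refine (finSum_eq_of_forall_ne hw b fun c hc => ?_).trans ?_
    · simp only [single_entry, Ne.symm hc, and_false, if_false]
    · simp only [single_entry, ha, and_self, if_true]
  · exact finSum_eq_of_forall hw fun c => by simp only [single_entry, ha, false_and, if_false]

theorem eq_finSum_single (hw : AddNeutral w) (A : Mat n S) :
    A = finSum fun i => finSum fun j => single w i j (A.entry i j) := by
  ext a b
  rw [finSum_entry, finSum_eq_of_forall_ne hw a fun c hc => ?_, finSum_single_entry hw,
    if_pos rfl]
  rw [finSum_single_entry hw, if_neg (Ne.symm hc)]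

end Mat

namespace CongSimple

variable {T : Type} [Add T] [Mul T] {r : T → T → Prop}

theorem rel_of_rel (hT : CongSimple T) (hr : IsCongruence r) {a b : T} (hab : r a b)
    (hne : a ≠ b) (u v : T) : r u v :=
  (hT.2 r hr).elim (fun hid => absurd ((hid a b).1 hab) hne) fun hfull => hfull u v

end CongSimple

theorem IsBiIdeal.isCongruence {T : Type} [AddCommMagma T] [Mul T] {I : Set T}
    (hI : IsBiIdeal I) : IsCongruence fun a b => a = b ∨ (a ∈ I ∧ b ∈ I) := by
  have hadd : ∀ a b, a ∈ I → a + b ∈ I ∧ b + a ∈ I := fun a b ha =>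
    ⟨(hI.2 a ha b).1, add_comm a b ▸ (hI.2 a ha b).1⟩
  refine ⟨⟨fun _ => Or.inl rfl, ?_, ?_⟩, ?_, ?_⟩
  · rintro a b (rfl | ⟨ha, hb⟩)
    exacts [Or.inl rfl, Or.inr ⟨hb, ha⟩]
  · rintro a b c (rfl | ⟨ha, hb⟩) (rfl | ⟨hb', hc⟩)
    exacts [Or.inl rfl, Or.inr ⟨hb', hc⟩, Or.inr ⟨ha, hb⟩, Or.inr ⟨ha, hc⟩]
  · rintro a b c d (rfl | ⟨ha, hb⟩) (rfl | ⟨hc, hd⟩)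
    exacts [Or.inl rfl, Or.inr ⟨(hadd c a hc).2, (hadd d a hd).2⟩,
      Or.inr ⟨(hadd a c ha).1, (hadd b c hb).1⟩, Or.inr ⟨(hadd a c ha).1, (hadd b d hb).1⟩]
  · rintro a b c d (rfl | ⟨ha, hb⟩) (rfl | ⟨hc, hd⟩)
    exacts [Or.inl rfl, Or.inr ⟨(hI.2 c hc a).2.2, (hI.2 d hd a).2.2⟩,
      Or.inr ⟨(hI.2 a ha c).2.1, (hI.2 b hb c).2.1⟩,
      Or.inr ⟨(hI.2 a ha c).2.1, (hI.2 b hb d).2.1⟩]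

section Semiring

variable {S : Type} [PSemiring S]

theorem isCongruence_forall_mul_eq :
    IsCongruence fun u v : S => (∀ x, x * u = x * v) ∧ ∀ y, u * y = v * y := by
  refine ⟨⟨fun _ => ⟨fun _ => rfl, fun _ => rfl⟩, fun h => ⟨fun x => (h.1 x).symm,
    fun y => (h.2 y).symm⟩, fun h h' => ⟨fun x => (h.1 x).trans (h'.1 x),
    fun y => (h.2 y).trans (h'.2 y)⟩⟩, ?_, ?_⟩
  · intro a b c d h h'
    refine ⟨fun x => ?_, fun y => ?_⟩
    · rw [PSemiring.left_distrib, PSemiring.left_distrib, h.1, h'.1]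
    · rw [PSemiring.right_distrib, PSemiring.right_distrib, h.2, h'.2]
  · intro a b c d h h'
    refine ⟨fun x => ?_, fun y => ?_⟩
    · rw [← mul_assoc, ← mul_assoc, h.1, mul_assoc, mul_assoc, h'.1, ← mul_assoc]
    · rw [mul_assoc, mul_assoc, h'.2, ← mul_assoc, ← mul_assoc, h.2, mul_assoc]

theorem isCongruence_forall_mul_mul_eq :
    IsCongruence fun u v : S => ∀ x y, x * u * y = x * v * y := by
  refine ⟨⟨fun _ _ _ => rfl, fun h x y => (h x y).symm,
    fun h h' x y => (h x y).trans (h' x y)⟩, ?_, ?_⟩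
  · intro a b c d h h' x y
    rw [PSemiring.left_distrib, PSemiring.right_distrib, h, h', ← PSemiring.right_distrib,
      ← PSemiring.left_distrib]
  · intro a b c d h h' x y
    calc x * (a * c) * y = x * a * (c * y) := by simp only [mul_assoc]
      _ = x * b * (c * y) := h x (c * y)
      _ = x * b * c * y := by simp only [mul_assoc]
      _ = x * (b * d) * y := by rw [h' (x * b) y, mul_assoc x b d]

/-- If the sandwich congruence were full, `S·S·S = {w}` and the congruence
`isCongruence_forall_mul_eq` would identify two distinct products. -/
theorem eq_of_forall_mul_mul_eq (hS : CongSimple S) (hSS : ∃ a b c d : S, a * b ≠ c * d)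
    {w : S} (hw : MulAbsorbing w) {u v : S} (huv : ∀ x y, x * u * y = x * v * y) :
    u = v := by
  obtain ⟨a, b, c, d, hne⟩ := hSS
  rcases hS.2 _ isCongruence_forall_mul_mul_eq with hid | hfull
  · exact (hid u v).1 huv
  have triple_eq : ∀ x y z : S, x * y * z = w := fun x y z => by
    rw [hfull y w x z, (hw x).1, (hw z).2]
  have hrel : (∀ x, x * (a * b) = x * (c * d)) ∧ ∀ y, a * b * y = c * d * y :=
    ⟨fun x => by rw [← mul_assoc, ← mul_assoc, triple_eq, triple_eq],
      fun y => by rw [triple_eq, triple_eq]⟩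
  rcases hS.2 _ isCongruence_forall_mul_eq with hid | hfull
  · exact absurd ((hid _ _).1 hrel) hne
  · exact absurd (((hfull b d).1 a).trans ((hfull a c).2 d)) hne

end Semiring

namespace MulAbsorbing

variable {S : Type} [PSemiring S] {w : S}

theorem add_self (hw : MulAbsorbing w) : w + w = w :=
  calc w + w = w * w + w * w := by rw [(hw w).1]
    _ = w * (w + w) := (PSemiring.left_distrib w w w).symm
    _ = w := (hw _).2

theorem isCongruence_add_eq_add (hw : MulAbsorbing w) :
    IsCongruence fun a b : S => a + w = b + w := by
  have add_add : ∀ a c : S, a + c + w = (a + w) + (c + w) := fun a c => by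
    rw [add_add_add_comm, hw.add_self]
  refine ⟨⟨fun _ => rfl, Eq.symm, Eq.trans⟩, fun a b c d h h' => ?_, fun a b c d h h' => ?_⟩
  · change a + c + w = b + d + w
    rw [add_add, add_add, h, h']
  · change a * c + w = b * d + w
    calc a * c + w = a * (c + w) := by rw [PSemiring.left_distrib, (hw a).1]
      _ = a * d + w := by rw [h', PSemiring.left_distrib, (hw a).1]
      _ = (a + w) * d := by rw [PSemiring.right_distrib, (hw d).2]
      _ = b * d + w := by rw [h, PSemiring.right_distrib, (hw d).2]

/-- The congruence `a + w = b + w` is the identity exactly when `w` is additively neutral,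
and full exactly when `w` is bi-absorbing. -/
theorem addNeutral (hw : MulAbsorbing w) (hS : CongSimple S)
    (hno : ¬∃ o : S, BiAbsorbing o) : AddNeutral w := by
  rcases hS.2 _ hw.isCongruence_add_eq_add with hid | hfull
  · exact fun a => (hid (a + w) a).1 (by rw [add_assoc, hw.add_self])
  · exact absurd ⟨w, hw, fun a => (hfull a w).trans hw.add_self⟩ hno

end MulAbsorbing

/-- Against constant matrices, `a * (∑ l, W l 0) = W 0 0` for all `a`, so `W 0 0` is
absorbing. -/
theorem exists_mulAbsorbing_of_mat {S : Type} [PSemiring S] {k : ℕ}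
    (hk : ∃ W : Mat k S, MulAbsorbing W) : ∃ w : S, MulAbsorbing w := by
  obtain ⟨W, hW⟩ := hk
  have left : ∀ a : S, a * finSum (fun l => W.entry l 0) = W.entry 0 0 := fun a => by
    rw [mul_finSum]
    exact congrArg (fun A => Mat.entry A 0 0) (hW (Mat.const k a)).1
  have right : ∀ a : S, finSum (fun l => W.entry 0 l) * a = W.entry 0 0 := fun a => by
    rw [finSum_mul]
    exact congrArg (fun A => Mat.entry A 0 0) (hW (Mat.const k a)).2
  refine ⟨W.entry 0 0, fun x => ⟨?_, ?_⟩⟩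
  · nth_rewrite 1 [← left x]
    rw [← mul_assoc, left]
  · nth_rewrite 1 [← right x]
    rw [mul_assoc, right]

theorem IsCongruence.entrywise {S : Type} [Add S] [Mul S] {n : ℕ} {r : S → S → Prop}
    (hr : IsCongruence r) :
    IsCongruence fun A B : Mat n S => ∀ i j, r (A.entry i j) (B.entry i j) := by
  obtain ⟨⟨hrefl, hsymm, htrans⟩, hadd, hmul⟩ := hr
  exact ⟨⟨fun _ _ _ => hrefl _, fun h i j => hsymm (h i j),
      fun h h' i j => htrans (h i j) (h' i j)⟩,
    fun _ _ _ _ h h' i j => hadd _ _ _ _ (h i j) (h' i j),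
    fun _ _ _ _ h h' i j => finSum_rel hadd fun t => hmul _ _ _ _ (h i t) (h' t j)⟩

theorem IsCongruence.comap_single {S : Type} [PSemiring S] {n : ℕ} {w : S} (hw : IsZero w)
    {R : Mat n S → Mat n S → Prop} (hR : IsCongruence R) :
    IsCongruence fun u v : S => ∀ i j, R (Mat.single w i j u) (Mat.single w i j v) := by
  obtain ⟨hequiv, hadd, hmul⟩ := hR
  refine ⟨⟨fun _ _ _ => hequiv.refl _, fun h i j => hequiv.symm (h i j),
    fun h h' i j => hequiv.trans (h i j) (h' i j)⟩, fun a b c d h h' i j => ?_,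
    fun a b c d h h' i j => ?_⟩
  · simpa only [Mat.single_add_single hw.2] using hadd _ _ _ _ (h i j) (h' i j)
  · simpa only [Mat.single_mul_single hw] using hmul _ _ _ _ (h i i) (h' i j)

theorem congSimple_of_congSimple_mat {S : Type} [Add S] [Mul S] {n : ℕ}
    (h : CongSimple (Mat n S)) : CongSimple S := by
  refine ⟨Mat.exists_ne_of_exists_ne h.1, fun r hr => ?_⟩
  rcases h.2 _ hr.entrywise with hid | hfull
  · exact Or.inl fun a b =>
      ⟨fun hab => Mat.const_injective ((hid _ _).1 fun _ _ => hab), fun e => e ▸ hr.1.refl a⟩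
  · exact Or.inr fun a b => hfull (Mat.const n a) (Mat.const n b) 0 0

section Necessity

variable {S : Type} [PSemiring S] {n : ℕ}

theorem isBiIdeal_setOf_exists_entry_eq {o : S} (ho : BiAbsorbing o) :
    IsBiIdeal {A : Mat n S | ∃ i j, A.entry i j = o} := by
  refine ⟨⟨Mat.const n o, 0, 0, rfl⟩, fun A ⟨i, j, hA⟩ C => ⟨?_, ?_, ?_⟩⟩
  · exact ⟨i, j, by rw [Mat.add_entry, hA, add_comm]; exact ho.2 _⟩
  · exact ⟨i, 0, finSum_eq_of_addAbsorbing ho.2 j (by rw [hA]; exact (ho.1 _).2)⟩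
  · exact ⟨0, j, finSum_eq_of_addAbsorbing ho.2 i (by rw [hA]; exact (ho.1 _).1)⟩

theorem not_exists_biAbsorbing_of_congSimple_mat (h : CongSimple (Mat (n + 1) S)) :
    ¬∃ o : S, BiAbsorbing o := by
  rintro ⟨o, ho⟩
  obtain ⟨z, hz⟩ : ∃ z : S, z ≠ o := by
    obtain ⟨x, y, hxy⟩ := Mat.exists_ne_of_exists_ne h.1
    have : Nontrivial S := ⟨x, y, hxy⟩
    exact exists_ne o
  have hfull := h.rel_of_rel (isBiIdeal_setOf_exists_entry_eq ho).isCongruence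
    (Or.inr ⟨⟨0, 0, Mat.single_entry_self z 0 0 o⟩, ⟨0, 0, rfl⟩⟩)
    (Mat.single_zero_zero_ne_const hz.symm)
  rcases hfull (Mat.const _ z) (Mat.const _ o) with heq | ⟨⟨_, _, hzo⟩, -⟩
  exacts [hz (Mat.const_injective heq), hz hzo]

theorem exists_mul_ne_of_congSimple_mat (h : CongSimple (Mat (n + 1) S)) :
    ∃ a b c d : S, a * b ≠ c * d := by
  by_contra! hmul
  obtain ⟨x, y, hxy⟩ := Mat.exists_ne_of_exists_ne h.1
  have hr : IsCongruence fun A B : Mat (n + 1) S => A.entry 0 0 = B.entry 0 0 :=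
    ⟨⟨fun _ => rfl, Eq.symm, Eq.trans⟩,
      fun _ _ _ _ h h' => by simp only [Mat.add_entry, h, h'],
      fun _ _ _ _ _ _ => by
        simp only [Mat.mul_entry]
        exact congrArg finSum (funext fun _ => hmul _ _ _ _)⟩
  exact hxy (h.rel_of_rel hr (Mat.single_entry_self y 0 0 x)
    (Mat.single_zero_zero_ne_const hxy) (Mat.const _ x) (Mat.const _ y))

end Necessity

theorem congSimple_mat {S : Type} [PSemiring S] {w : S} (hw : IsZero w) (hS : CongSimple S)
    (hSS : ∃ a b c d : S, a * b ≠ c * d) (n : ℕ) : CongSimple (Mat n S) := by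
  obtain ⟨x, y, hxy⟩ := hS.1
  refine ⟨⟨_, _, (Mat.const_injective (n := n)).ne hxy⟩, fun R hR => ?_⟩
  rcases hS.2 _ (hR.comap_single hw) with hid | hfull
  · refine Or.inl fun A B => ⟨fun hAB => Mat.ext fun p q => ?_, fun e => e ▸ hR.1.refl A⟩
    refine eq_of_forall_mul_mul_eq hS hSS hw.1 fun x y => (hid _ _).1 fun i j => ?_
    have := hR.2.2 _ _ _ _ (hR.2.2 _ _ _ _ (hR.1.refl (Mat.single w i p x)) hAB)
      (hR.1.refl (Mat.single w q j y))
    rwa [Mat.single_mul_mul_single hw, Mat.single_mul_mul_single hw] at this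
  · refine Or.inr fun A B => ?_
    rw [Mat.eq_finSum_single hw.2 A, Mat.eq_finSum_single hw.2 B]
    exact finSum_rel hR.2.1 fun i => finSum_rel hR.2.1 fun j => hfull _ _ i j

/-- if some `M_k(S)` has a multiplicatively absorbing element, then
(i) all `M_n(S)` (`n ≥ 1`) congruence-simple ↔ (ii) some `M_n(S)` (`n ≥ 2`)
congruence-simple ↔ (iii) `S` congruence-simple, without bi-absorbing element and
`|S·S| ≥ 2`.  (`Mat n S` has size `n+1`.) -/
theorem stmt10 {S : Type} [PSemiring S] (k : ℕ)
    (hk : ∃ W : Mat k S, MulAbsorbing W) :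
    ((∀ n : ℕ, CongSimple (Mat n S)) ↔ ∃ n : ℕ, CongSimple (Mat (n + 1) S)) ∧
    ((∃ n : ℕ, CongSimple (Mat (n + 1) S)) ↔
      (CongSimple S ∧ (¬∃ o : S, BiAbsorbing o) ∧ ∃ a b c d : S, a * b ≠ c * d)) := by
  obtain ⟨w, hw⟩ := exists_mulAbsorbing_of_mat hk
  have necessary : (∃ n : ℕ, CongSimple (Mat (n + 1) S)) →
      CongSimple S ∧ (¬∃ o : S, BiAbsorbing o) ∧ ∃ a b c d : S, a * b ≠ c * d :=
    fun ⟨_, h⟩ => ⟨congSimple_of_congSimple_mat h, not_exists_biAbsorbing_of_congSimple_mat h,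
      exists_mul_ne_of_congSimple_mat h⟩
  have sufficient :
      CongSimple S ∧ (¬∃ o : S, BiAbsorbing o) ∧ (∃ a b c d : S, a * b ≠ c * d) →
        ∀ n : ℕ, CongSimple (Mat n S) :=
    fun ⟨hS, hno, hSS⟩ => congSimple_mat ⟨hw, hw.addNeutral hS hno⟩ hS hSS
  exact ⟨⟨fun h => ⟨0, h 1⟩, fun h => sufficient (necessary h)⟩,
    ⟨necessary, fun h => ⟨0, sufficient h 1⟩⟩⟩
end

section
/- Let S be a congruence-simple additively cancellative semiring that is not a ring. Then the standard quasiordering ≤_S on S is antisymmetric, hence a partial order on S. -/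
/-!
The kernel of `≤_S` (mutual comparability) is a congruence, so by simplicity it is either the
identity, which is antisymmetry, or everything. In the latter case `a + a ≤_S a` yields an
additive idempotent `z` by cancellation; `z ≤_S b` makes `z` neutral and `b ≤_S z` gives `b`
an additive inverse, so `S` would be a ring.
-/

lemma leS_refl {T : Type} [Add T] [Mul T] (a : T) : leS a a := Or.inl rfl

lemma leS_trans {T : Type} [AddSemigroup T] [Mul T] {a b c : T} (hab : leS a b)
    (hbc : leS b c) : leS a c := by
  rcases hab with rfl | ⟨x, rfl⟩
  · exact hbc
  · rcases hbc with rfl | ⟨y, rfl⟩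
    · exact Or.inr ⟨x, rfl⟩
    · exact Or.inr ⟨x + y, (add_assoc a x y).symm⟩

lemma leS_add {T : Type} [AddCommSemigroup T] [Mul T] {a b c d : T} (hab : leS a b)
    (hcd : leS c d) :
    leS (a + c) (b + d) := by
  rcases hab with rfl | ⟨x, rfl⟩ <;> rcases hcd with rfl | ⟨y, rfl⟩
  · exact leS_refl _
  · exact Or.inr ⟨y, add_assoc a c y⟩
  · exact Or.inr ⟨x, add_right_comm a c x⟩
  · exact Or.inr ⟨x + y, add_add_add_comm a c x y⟩

lemma leS_mul {S : Type} [PSemiring S] {a b c d : S} (hab : leS a b) (hcd : leS c d) :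
    leS (a * c) (b * d) := by
  rcases hab with rfl | ⟨x, rfl⟩ <;> rcases hcd with rfl | ⟨y, rfl⟩
  · exact leS_refl _
  · exact Or.inr ⟨a * y, (PSemiring.left_distrib a c y).symm⟩
  · exact Or.inr ⟨x * c, (PSemiring.right_distrib a x c).symm⟩
  · refine Or.inr ⟨a * y + (x * c + x * y), ?_⟩
    rw [PSemiring.right_distrib, PSemiring.left_distrib, PSemiring.left_distrib, add_assoc]

def leSKernel {T : Type} [Add T] [Mul T] (a b : T) : Prop := leS a b ∧ leS b a

lemma isCongruence_leSKernel {S : Type} [PSemiring S] : IsCongruence (leSKernel (T := S)) :=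
  ⟨⟨fun a => ⟨leS_refl a, leS_refl a⟩, fun h => ⟨h.2, h.1⟩,
      fun h h' => ⟨leS_trans h.1 h'.1, leS_trans h'.2 h.2⟩⟩,
    fun _ _ _ _ h h' => ⟨leS_add h.1 h'.1, leS_add h.2 h'.2⟩,
    fun _ _ _ _ h h' => ⟨leS_mul h.1 h'.1, leS_mul h.2 h'.2⟩⟩

lemma exists_add_self_eq_of_leS_add_self {T : Type} [AddCommSemigroup T] [Mul T]
    (hcancel : ∀ a b c : T, a + c = b + c → a = b)
    {a : T} (ha : leS (a + a) a) : ∃ z : T, z + z = z := by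
  rcases ha with ha | ⟨c, hc⟩
  · exact ⟨a, ha⟩
  · -- `z := a + c` is absorbed by `a`, hence `z + z + a = z + a`.
    have hz : a + (a + c) = a := by rw [← add_assoc, hc]
    refine ⟨a + c, hcancel _ _ a ?_⟩
    rw [add_assoc, add_comm (a + c) a, hz, add_comm (a + c) a, hz]

lemma add_eq_self_of_leS {T : Type} [AddCommSemigroup T] [Mul T] {z b : T} (hz : z + z = z)
    (hzb : leS z b) : b + z = b := by
  rcases hzb with rfl | ⟨c, rfl⟩
  · exact hz
  · rw [add_right_comm, hz]

lemma exists_addNeutral_and_neg_of_forall_leSKernel {T : Type} [AddCommSemigroup T] [Mul T]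
    (hcancel : ∀ a b c : T, a + c = b + c → a = b) (a : T)
    (hfull : ∀ a b : T, leSKernel a b) :
    ∃ z : T, (∀ b : T, b + z = b) ∧ ∀ b : T, ∃ c : T, b + c = z := by
  obtain ⟨z, hz⟩ := exists_add_self_eq_of_leS_add_self hcancel (hfull (a + a) a).1
  refine ⟨z, fun b => add_eq_self_of_leS hz (hfull z b).1, fun b => ?_⟩
  rcases (hfull b z).1 with rfl | ⟨c, hc⟩
  · exact ⟨b, hz⟩
  · exact ⟨c, hc⟩

/-- for a congruence-simple additively cancellative semiring that is
not a ring, the standard quasiordering is antisymmetric. -/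
theorem stmt19 {S : Type} [PSemiring S] (h1 : CongSimple S)
    (h2 : ∀ a b c : S, a + c = b + c → a = b)
    (h3 : ¬∃ z : S, (∀ a : S, a + z = a) ∧ ∀ a : S, ∃ b : S, a + b = z) :
    ∀ a b : S, leS a b → leS b a → a = b := by
  intro a b hab hba
  rcases h1.2 leSKernel isCongruence_leSKernel with hid | hfull
  · exact (hid a b).1 ⟨hab, hba⟩
  · exact absurd (exists_addNeutral_and_neg_of_forall_leSKernel h2 a hfull) h3
end
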